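/- arXiv:1204.0219 — 2 statements merged into one kernel-verified Lean document; each statement's English description precedes it below -/
import Mathlib

section
/- Let G be a graph (with distance function d), let v be a vertex, and let p1 be a shortest path from s1 to t1 and p2 a shortest path from s2 to t2, both passing through v. Suppose an edge e = (v1, v2) lies on both paths, appearing after v on both p1 and p2 (i.e., on the v-to-target portion of each path). If p1 traverses e from v1 to v2 and p2 traverses e from v2 to v1, then denoting d1 the distance from v to v1 along p1 and d2 the distance from v to v2 along p2, we get d1 + 1 ≤ d2 and d2 + 1 ≤ d1, a contradiction. Hence two shortest paths through v cannot traverse a common edge in opposite directions when the edge lies after v on both. -/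
private lemma sub_shortest {V : Type*} {G : SimpleGraph V} {u m w : V}
    (a : G.Walk u m) (b : G.Walk m w)
    (h : (a.append b).length = G.dist u w) :
    a.length = G.dist u m ∧ b.length = G.dist m w := by
  have hab : a.length + b.length = G.dist u w := by
    simpa [SimpleGraph.Walk.length_append] using h
  have ha : G.dist u m ≤ a.length := SimpleGraph.dist_le a
  have hb : G.dist m w ≤ b.length := SimpleGraph.dist_le b
  obtain ⟨a', ha'⟩ := (a.reachable).exists_walk_length_eq_dist
  obtain ⟨b', hb'⟩ := (b.reachable).exists_walk_length_eq_dist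
  have h1 : G.dist u w ≤ G.dist u m + b.length := by
    simpa [SimpleGraph.Walk.length_append, ha'] using SimpleGraph.dist_le (a'.append b)
  have h2 : G.dist u w ≤ a.length + G.dist m w := by
    simpa [SimpleGraph.Walk.length_append, hb'] using SimpleGraph.dist_le (a.append b')
  omega

/-- Two shortest paths through a common vertex `v` cannot traverse a common
edge `{v1, v2}` in opposite directions when the edge appears after `v` on both:
`p1 = q1 ++ (r1 ++ (v1,v2)·c1)` and `p2 = q2 ++ (r2 ++ (v2,v1)·c2)` leads to
`d1 + 1 ≤ d2` and `d2 + 1 ≤ d1`, a contradiction. -/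
theorem stmt0 {V : Type*} (G : SimpleGraph V) (s1 t1 s2 t2 v v1 v2 : V)
    (h12 : G.Adj v1 v2) (h21 : G.Adj v2 v1)
    (p1 : G.Walk s1 t1) (p2 : G.Walk s2 t2)
    (hs1 : p1.length = G.dist s1 t1) (hs2 : p2.length = G.dist s2 t2)
    (q1 : G.Walk s1 v) (r1 : G.Walk v v1) (c1 : G.Walk v2 t1)
    (q2 : G.Walk s2 v) (r2 : G.Walk v v2) (c2 : G.Walk v1 t2)
    (hp1 : p1 = q1.append (r1.append (SimpleGraph.Walk.cons h12 c1)))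
    (hp2 : p2 = q2.append (r2.append (SimpleGraph.Walk.cons h21 c2))) :
    False := by
  subst hp1 hp2
  -- p1: middle part r1 ++ cons h12 c1 is shortest from v to t1
  have h1 := (sub_shortest q1 (r1.append (SimpleGraph.Walk.cons h12 c1)) hs1).2
  have h2 := (sub_shortest q2 (r2.append (SimpleGraph.Walk.cons h21 c2)) hs2).2
  -- (r1 ++ single) ++ c1 shortest ⇒ r1 ++ single shortest from v to v2
  have e1 : ((r1.append (SimpleGraph.Walk.cons h12 SimpleGraph.Walk.nil)).append c1).length
      = G.dist v t1 := by
    simp [SimpleGraph.Walk.length_append] at h1 ⊢; omega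
  have e2 : ((r2.append (SimpleGraph.Walk.cons h21 SimpleGraph.Walk.nil)).append c2).length
      = G.dist v t2 := by
    simp [SimpleGraph.Walk.length_append] at h2 ⊢; omega
  have f1 := (sub_shortest _ _ e1).1
  have f2 := (sub_shortest _ _ e2).1
  -- also r1 itself shortest
  have g1 := (sub_shortest r1 (SimpleGraph.Walk.cons h12 c1)
      (by simpa [SimpleGraph.Walk.length_append] using h1)).1
  have g2 := (sub_shortest r2 (SimpleGraph.Walk.cons h21 c2)
      (by simpa [SimpleGraph.Walk.length_append] using h2)).1
  simp [SimpleGraph.Walk.length_append] at f1 f2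
  omega
end

section
/- (Local-to-global orientation.) Let G be an acyclic mixed graph and v a vertex. Associate each request crossing v with a shortest path through v, and let S be a set of such shortest paths whose restrictions to the local neighborhood (star) of v can be simultaneously satisfied by a single orientation of the star's edges. Then no two paths in S are in conflict (no common undirected edge receives opposite directions), and therefore there is an orientation of all of G under which every path of S is a directed path from its source to its target. -/
/-!
Suppose two paths of `S` traverse an edge `ab` in opposite directions; the star of `v` rules
this out when `v ∈ {a, b}`, so assume `v ∉ {a, b}`. On each path, `v` then lies either before or
after the edge. If it lies before on both (or after on both), the two subpaths of the shortest
paths give `d(v,a) + 1 = d(v,b)` and `d(v,b) + 1 = d(v,a)`. Otherwise one path runs from `v` to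
`a` and the other from `a` back to `v`, a closed mixed walk through `v`. Shortcutting repeated
edges keeps it a closed walk through `v`: a repetition in the same direction is cut out as a
loop, and one in opposite directions is cut out together with everything in between; this could
only lose the base point `v` if the edge touched `v`, which the local orientation forbids. This
ends in a mixed cycle with distinct edges, contradicting acyclicity. Once no two paths conflict,
orienting the edges of the paths along them, and every other edge as in the local orientation,
satisfies all of `S`.
-/

section

variable {V : Type*} {G : SimpleGraph V} {EU : Set (Sym2 V)} {D : V → V → Prop}
  {o : V → V → Bool} {u v w m a b : V} {l l₁ l₂ : List (V × V)}

def IsStepWalk (G : SimpleGraph V) : V → List (V × V) → V → Prop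
  | u, [], w => u = w
  | u, e :: l, w => e.1 = u ∧ G.Adj e.1 e.2 ∧ IsStepWalk G e.2 l w

@[simp]
theorem isStepWalk_nil : IsStepWalk G u [] w ↔ u = w := Iff.rfl

@[simp]
theorem isStepWalk_cons {e : V × V} :
    IsStepWalk G u (e :: l) w ↔ e.1 = u ∧ G.Adj e.1 e.2 ∧ IsStepWalk G e.2 l w := Iff.rfl

theorem isStepWalk_append :
    IsStepWalk G u (l₁ ++ l₂) w ↔ ∃ m, IsStepWalk G u l₁ m ∧ IsStepWalk G m l₂ w := by
  induction l₁ generalizing u with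
  | nil => simp
  | cons e l₁ ih => simp [ih, and_assoc]

theorem isStepWalk_of_isChain (hne : l ≠ []) (hc : l.IsChain (fun e f => e.2 = f.1))
    (hadj : ∀ e ∈ l, G.Adj e.1 e.2) : IsStepWalk G (l.head hne).1 l (l.getLast hne).2 := by
  induction l with
  | nil => contradiction
  | cons e l ih =>
    cases l with
    | nil => simp [hadj]
    | cons f l =>
      obtain ⟨hef, hc⟩ := List.isChain_cons_cons.1 hc
      refine ⟨rfl, hadj e (by simp), ?_⟩
      simpa [hef] using ih (by simp) hc (fun e he => hadj e (by simp [he]))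

namespace IsStepWalk

theorem unique (h : IsStepWalk G u l w) (h' : IsStepWalk G u l m) : w = m := by
  induction l generalizing u with
  | nil => exact h.symm.trans h'
  | cons e l ih => exact ih h.2.2 h'.2.2

theorem isChain (h : IsStepWalk G u l w) : l.IsChain (fun e f => e.2 = f.1) := by
  induction l generalizing u with
  | nil => exact .nil
  | cons e l ih =>
    cases l with
    | nil => exact .singleton e
    | cons f l => exact List.isChain_cons_cons.2 ⟨h.2.2.1.symm, ih h.2.2⟩

theorem fst_eq_of_head?_eq (h : IsStepWalk G u l w) {e : V × V} (he : l.head? = some e) :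
    e.1 = u := by
  cases l with
  | nil => simp at he
  | cons f l => exact Option.some_injective _ he ▸ h.1

theorem snd_eq_of_getLast?_eq (h : IsStepWalk G u l w) {f : V × V}
    (hf : l.getLast? = some f) : f.2 = w := by
  obtain ⟨l', rfl⟩ := List.getLast?_eq_some_iff.1 hf
  obtain ⟨_, -, -, -, hw⟩ := isStepWalk_append.1 h
  exact hw

theorem exists_walk_length_eq (h : IsStepWalk G u l w) :
    ∃ p : G.Walk u w, p.length = l.length := by
  induction l generalizing u with
  | nil => cases h; exact ⟨.nil, rfl⟩
  | cons e l ih =>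
    obtain ⟨p, hp⟩ := ih h.2.2
    exact h.1 ▸ ⟨.cons h.2.1 p, by simp [hp]⟩

theorem reachable (h : IsStepWalk G u l w) : G.Reachable u w :=
  let ⟨p, _⟩ := h.exists_walk_length_eq
  p.reachable

theorem dist_le (h : IsStepWalk G u l w) : G.dist u w ≤ l.length :=
  let ⟨p, hp⟩ := h.exists_walk_length_eq
  hp ▸ SimpleGraph.dist_le p

theorem exists_eq_append_of_mem (h : IsStepWalk G u l w) {e : V × V} (he : e ∈ l)
    (hv : e.1 = v ∨ e.2 = v) :
    ∃ l₁ l₂, l = l₁ ++ l₂ ∧ IsStepWalk G u l₁ v ∧ IsStepWalk G v l₂ w := by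
  obtain ⟨X, Y, rfl⟩ := List.append_of_mem he
  obtain ⟨m, hX, he₁, hadj, hY⟩ := isStepWalk_append.1 h
  rcases hv with rfl | rfl
  · exact ⟨X, e :: Y, rfl, he₁ ▸ hX, rfl, hadj, hY⟩
  · exact ⟨X ++ [e], Y, by simp, isStepWalk_append.2 ⟨m, hX, he₁, hadj, rfl⟩, hY⟩

end IsStepWalk

def IsGeodesic (G : SimpleGraph V) (u : V) (l : List (V × V)) (w : V) : Prop :=
  IsStepWalk G u l w ∧ l.length = G.dist u w

namespace IsGeodesic

theorem append (h : IsGeodesic G u (l₁ ++ l₂) w) (h₁ : IsStepWalk G u l₁ m) :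
    IsGeodesic G u l₁ m ∧ IsGeodesic G m l₂ w := by
  obtain ⟨m', h₁', h₂⟩ := isStepWalk_append.1 h.1
  obtain rfl := h₁'.unique h₁
  have hlen := h.2
  rw [List.length_append] at hlen
  have := h₁.reachable.dist_triangle_left w
  have := h₁.dist_le
  have := h₂.dist_le
  exact ⟨⟨h₁, by omega⟩, h₂, by omega⟩

theorem dist_snoc (h : IsGeodesic G u (l ++ [(a, b)]) b) :
    IsStepWalk G u l a ∧ G.dist u a + 1 = G.dist u b := by
  obtain ⟨m, hl, hm, -, -⟩ := isStepWalk_append.1 h.1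
  obtain rfl : m = a := hm.symm
  have hla := (h.append hl).1.2
  have hlen := h.2
  simp only [List.length_append, List.length_singleton] at hlen
  exact ⟨hl, by omega⟩

theorem dist_cons (h : IsGeodesic G a ((a, b) :: l) w) :
    IsStepWalk G b l w ∧ G.dist b w + 1 = G.dist a w := by
  obtain ⟨-, hadj, hl⟩ := h.1
  have hlb := (h.append (l₁ := [(a, b)]) (m := b) ⟨rfl, hadj, rfl⟩).2.2
  have hlen := h.2
  simp only [List.length_cons] at hlen
  exact ⟨hl, by omega⟩

theorem dist_cases_of_visit (h : IsGeodesic G u l w) (hab : (a, b) ∈ l) {e : V × V}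
    (he : e ∈ l) (hv : e.1 = v ∨ e.2 = v) :
    (∃ l' ⊆ l, IsStepWalk G v l' a ∧ G.dist v a + 1 = G.dist v b) ∨
    (∃ l' ⊆ l, IsStepWalk G b l' v ∧ G.dist b v + 1 = G.dist a v) := by
  obtain ⟨P, R, rfl, hP, hR⟩ := h.1.exists_eq_append_of_mem he hv
  obtain ⟨hP', hR'⟩ := h.append hP
  obtain ⟨A, B, hl⟩ := List.append_of_mem hab
  have before : ∀ A', R = A' ++ (a, b) :: B →
      ∃ l' ⊆ P ++ R, IsStepWalk G v l' a ∧ G.dist v a + 1 = G.dist v b := by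
    rintro A' rfl
    obtain ⟨m, hA', hm, hadj, -⟩ := isStepWalk_append.1 hR
    have hsnoc : IsStepWalk G v (A' ++ [(a, b)]) b :=
      isStepWalk_append.2 ⟨m, hA', hm, hadj, rfl⟩
    rw [show A' ++ (a, b) :: B = (A' ++ [(a, b)]) ++ B by simp] at hR'
    refine ⟨A', fun x hx => by simp [hx], (hR'.append hsnoc).1.dist_snoc⟩
  rcases List.append_eq_append_iff.1 hl with ⟨A', -, hR⟩ | ⟨_ | ⟨x, B'⟩, hA, hR⟩
  · exact .inl (before A' hR)
  · exact .inl (before [] (by simpa using hR.symm))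
  · obtain ⟨rfl, -⟩ := List.cons_eq_cons.1 hR
    subst hA
    obtain ⟨m, hA, hm, -⟩ := isStepWalk_append.1 hP
    obtain rfl : m = a := hm.symm
    exact .inr ⟨B', fun x hx => by simp [hx], (hP'.append hA).2.dist_cons⟩

end IsGeodesic

def IsMixedStep (G : SimpleGraph V) (EU : Set (Sym2 V)) (D : V → V → Prop) (e : V × V) :
    Prop :=
  G.Adj e.1 e.2 ∧ (Sym2.mk.uncurry e ∈ EU ∨ D e.1 e.2)

def IsLocalStep (G : SimpleGraph V) (EU : Set (Sym2 V)) (D : V → V → Prop)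
    (o : V → V → Bool) (v : V) (e : V × V) : Prop :=
  IsMixedStep G EU D e ∧ ((e.1 = v ∨ e.2 = v) → o e.1 e.2 = true)

def IsMixedAcyclic (G : SimpleGraph V) (EU : Set (Sym2 V)) (D : V → V → Prop) : Prop :=
  ¬ ∃ l : List (V × V), l ≠ [] ∧ l.IsChain (fun e f => e.2 = f.1) ∧
    (∀ e ∈ l, IsMixedStep G EU D e) ∧
    (∀ e f, l.head? = some e → l.getLast? = some f → f.2 = e.1) ∧
    (l.map Sym2.mk.uncurry).Nodup

theorem List.exists_eq_append_cons_append_cons_of_not_nodup_map {α β : Type*}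
    (g : α → β) {l : List α} (h : ¬ (l.map g).Nodup) :
    ∃ P x M y Q, l = P ++ x :: M ++ y :: Q ∧ g x = g y := by
  induction l with
  | nil => simp at h
  | cons z t ih =>
    rw [List.map_cons, List.nodup_cons, not_and_or, not_not] at h
    rcases h with hz | ht
    · obtain ⟨y, hy, hgy⟩ := List.mem_map.1 hz
      obtain ⟨M, Q, rfl⟩ := List.append_of_mem hy
      exact ⟨[], z, M, y, Q, by simp, hgy.symm⟩
    · obtain ⟨P, x, M, y, Q, rfl, hxy⟩ := ih ht
      exact ⟨z :: P, x, M, y, Q, by simp, hxy⟩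

theorem IsMixedAcyclic.false_of_isStepWalk (hacyc : IsMixedAcyclic G EU D)
    (ho : ∀ a b, G.Adj a b → o a b = !o b a) {W : List (V × V)} (hW : IsStepWalk G v W v)
    (hne : W ≠ []) (hloc : ∀ e ∈ W, IsLocalStep G EU D o v e) : False := by
  by_cases hnd : (W.map Sym2.mk.uncurry).Nodup
  · exact hacyc ⟨W, hne, hW.isChain, fun e he => (hloc e he).1,
      fun _ _ he hf => (hW.snd_eq_of_getLast?_eq hf).trans (hW.fst_eq_of_head?_eq he).symm,
      hnd⟩
  obtain ⟨P, x, M, y, Q, rfl, hxy⟩ :=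
    List.exists_eq_append_cons_append_cons_of_not_nodup_map _ hnd
  obtain ⟨_, hPM, rfl, -, hQ⟩ := isStepWalk_append.1 hW
  obtain ⟨_, hP, rfl, hadj, -⟩ := isStepWalk_append.1 hPM
  rcases Sym2.mk_eq_mk_iff.1 hxy with rfl | hswap
  · exact hacyc.false_of_isStepWalk ho (W := P ++ x :: Q)
      (isStepWalk_append.2 ⟨_, hP, rfl, hadj, hQ⟩) (by simp)
      (fun e he => hloc e (by simp only [List.mem_append, List.mem_cons] at he ⊢; tauto))
  · obtain rfl : y = x.swap := by rw [hswap, Prod.swap_swap]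
    by_cases hxv : x.1 = v ∨ x.2 = v
    · have h₁ := (hloc x (by simp)).2 hxv
      have h₂ : o x.2 x.1 = true :=
        (hloc x.swap (by simp)).2 (by simpa [or_comm] using hxv)
      have h := ho _ _ hadj
      simp [h₁, h₂] at h
    have hPne : P ≠ [] := by
      rintro rfl
      exact hxv (.inl (isStepWalk_nil.1 hP).symm)
    exact hacyc.false_of_isStepWalk ho (W := P ++ Q)
      (isStepWalk_append.2 ⟨_, hP, hQ⟩) (by simp [hPne])
      (fun e he => hloc e (by simp only [List.mem_append, List.mem_cons] at he ⊢; tauto))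
termination_by W.length
decreasing_by
  all_goals subst_vars; simp only [List.length_append, List.length_cons]; omega

theorem IsMixedAcyclic.not_opposite_steps (hacyc : IsMixedAcyclic G EU D)
    (ho : ∀ a b, G.Adj a b → o a b = !o b a) {s₁ t₁ s₂ t₂ : V}
    (h₁ : IsGeodesic G s₁ l₁ t₁) (h₂ : IsGeodesic G s₂ l₂ t₂)
    (hv₁ : ∃ e ∈ l₁, e.1 = v ∨ e.2 = v) (hv₂ : ∃ e ∈ l₂, e.1 = v ∨ e.2 = v)
    (hloc₁ : ∀ e ∈ l₁, IsLocalStep G EU D o v e)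
    (hloc₂ : ∀ e ∈ l₂, IsLocalStep G EU D o v e)
    (hab : (a, b) ∈ l₁) (hba : (b, a) ∈ l₂) : False := by
  by_cases hv : a = v ∨ b = v
  · have h := ho a b (hloc₁ _ hab).1.1
    simp [(hloc₁ _ hab).2 hv, (hloc₂ _ hba).2 hv.symm] at h
  rw [not_or] at hv
  have closed : ∀ {x} {W₁ W₂ : List (V × V)}, x ≠ v → IsStepWalk G v W₁ x →
      IsStepWalk G x W₂ v → (∀ e ∈ W₁ ++ W₂, IsLocalStep G EU D o v e) → False :=
    fun hx hW₁ hW₂ hloc => by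
      refine hacyc.false_of_isStepWalk ho (isStepWalk_append.2 ⟨_, hW₁, hW₂⟩) (fun h => ?_) hloc
      obtain ⟨rfl, -⟩ := List.append_eq_nil_iff.1 h
      exact hx (isStepWalk_nil.1 hW₁).symm
  obtain ⟨e₁, he₁, hve₁⟩ := hv₁
  obtain ⟨e₂, he₂, hve₂⟩ := hv₂
  rcases h₁.dist_cases_of_visit hab he₁ hve₁ with
    ⟨W₁, hW₁, hvW₁, hd₁⟩ | ⟨W₁, hW₁, hW₁v, hd₁⟩ <;>
  rcases h₂.dist_cases_of_visit hba he₂ hve₂ with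
    ⟨W₂, hW₂, hvW₂, hd₂⟩ | ⟨W₂, hW₂, hW₂v, hd₂⟩
  · omega
  · refine closed hv.1 hvW₁ hW₂v fun e he => ?_
    rcases List.mem_append.1 he with he | he
    exacts [hloc₁ e (hW₁ he), hloc₂ e (hW₂ he)]
  · refine closed hv.2 hvW₂ hW₁v fun e he => ?_
    rcases List.mem_append.1 he with he | he
    exacts [hloc₂ e (hW₂ he), hloc₁ e (hW₁ he)]
  · omega

theorem exists_orientation_of_forall_not_mem_swap (T : Set (V × V))
    (hT : ∀ a b, (a, b) ∈ T → (b, a) ∉ T) (hTD : ∀ a b, D a b → (b, a) ∉ T)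
    (ho : ∀ a b, G.Adj a b → o a b = !o b a) (hoD : ∀ a b, D a b → o a b = true) :
    ∃ ori : V → V → Bool, (∀ a b, G.Adj a b → ori a b = !ori b a) ∧
      (∀ a b, D a b → ori a b = true) ∧ ∀ e ∈ T, ori e.1 e.2 = true := by
  classical
  refine ⟨fun a b => if (a, b) ∈ T then true else if (b, a) ∈ T then false else o a b,
    fun a b hadj => ?_, fun a b hD => by simp [hTD a b hD, hoD a b hD],
    fun e he => by simp [he]⟩
  by_cases hab : (a, b) ∈ T
  · simp [hab, hT a b hab]
  · by_cases hba : (b, a) ∈ T <;> simp [hab, hba, ho a b hadj]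

end

theorem stmt19_general {V : Type*} (G : SimpleGraph V)
    (EU : Set (Sym2 V)) (D : V → V → Prop)
    (hD : ∀ a b, D a b → G.Adj a b ∧ Sym2.mk a b ∉ EU ∧ ¬ D b a)
    (hacyc : ¬ ∃ l : List (V × V), l ≠ [] ∧
        List.Chain' (fun e f => e.2 = f.1) l ∧
        (∀ e ∈ l, G.Adj e.1 e.2 ∧ (Sym2.mk.uncurry e ∈ EU ∨ D e.1 e.2)) ∧
        (∀ e f, l.head? = some e → l.getLast? = some f → f.2 = e.1) ∧
        (l.map Sym2.mk.uncurry).Nodup)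
    (v : V) (S : Finset (List (V × V)))
    (hwalk : ∀ l ∈ S, l ≠ [] ∧ List.Chain' (fun e f => e.2 = f.1) l ∧
        ∀ e ∈ l, G.Adj e.1 e.2 ∧ (Sym2.mk.uncurry e ∈ EU ∨ D e.1 e.2))
    (hshort : ∀ l ∈ S, ∀ e f : V × V, l.head? = some e → l.getLast? = some f →
        l.length = G.dist e.1 f.2)
    (hcross : ∀ l ∈ S, ∃ e ∈ l, e.1 = v ∨ e.2 = v)
    (hlocal : ∃ oloc : V → V → Bool,
        (∀ a b, G.Adj a b → oloc a b = !oloc b a) ∧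
        (∀ a b, D a b → oloc a b = true) ∧
        ∀ l ∈ S, ∀ e ∈ l, (e.1 = v ∨ e.2 = v) → oloc e.1 e.2 = true) :
    (∀ l1 ∈ S, ∀ l2 ∈ S, ∀ a b : V,
        (a, b) ∈ l1 → (b, a) ∈ l2 → Sym2.mk a b ∉ EU) ∧
    ∃ ori : V → V → Bool,
      (∀ a b, G.Adj a b → ori a b = !ori b a) ∧
      (∀ a b, D a b → ori a b = true) ∧
      ∀ l ∈ S, ∀ e ∈ l, ori e.1 e.2 = true := by
  obtain ⟨o, ho, hoD, hoS⟩ := hlocal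
  have hloc : ∀ l ∈ S, ∀ e ∈ l, IsLocalStep G EU D o v e :=
    fun l hl e he => ⟨(hwalk l hl).2.2 e he, hoS l hl e he⟩
  have hgeo : ∀ l ∈ S, ∃ s t, IsGeodesic G s l t := fun l hl =>
    let ⟨hne, hc, hmixed⟩ := hwalk l hl
    ⟨_, _, isStepWalk_of_isChain hne hc (fun e he => (hmixed e he).1),
      hshort l hl _ _ (List.head?_eq_some_head hne) (List.getLast?_eq_some_getLast hne)⟩
  have hconflict : ∀ l₁ ∈ S, ∀ l₂ ∈ S, ∀ a b, (a, b) ∈ l₁ → (b, a) ∈ l₂ → False := by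
    intro l₁ hl₁ l₂ hl₂ a b hab hba
    obtain ⟨_, _, h₁⟩ := hgeo l₁ hl₁
    obtain ⟨_, _, h₂⟩ := hgeo l₂ hl₂
    exact IsMixedAcyclic.not_opposite_steps hacyc ho h₁ h₂ (hcross l₁ hl₁) (hcross l₂ hl₂)
      (hloc l₁ hl₁) (hloc l₂ hl₂) hab hba
  have hDS : ∀ a b, D a b → (b, a) ∉ {e | ∃ l ∈ S, e ∈ l} := by
    rintro a b hDab ⟨l, hl, hba⟩
    rcases ((hwalk l hl).2.2 _ hba).2 with hEU | hDba
    · exact (hD a b hDab).2.1 (by simpa [Sym2.eq_swap] using hEU)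
    · exact (hD a b hDab).2.2 hDba
  obtain ⟨ori, hskew, horiD, hori⟩ := exists_orientation_of_forall_not_mem_swap
    {e | ∃ l ∈ S, e ∈ l}
    (fun a b ⟨l₁, hl₁, hab⟩ ⟨l₂, hl₂, hba⟩ => hconflict l₁ hl₁ l₂ hl₂ a b hab hba)
    hDS ho hoD
  exact ⟨fun l₁ hl₁ l₂ hl₂ a b hab hba _ => hconflict l₁ hl₁ l₂ hl₂ a b hab hba,
    ori, hskew, horiD, fun l hl e he => hori e ⟨l, hl, he⟩⟩

/-- Local-to-global orientation. A mixed graph is given by a simple graph `G`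
whose edges split into undirected ones `EU` and pre-directed ones `D`; the
mixed graph is acyclic (no closed mixed walk using pairwise-distinct edges,
each traversed consistently with `D`). Paths are encoded as nonempty lists of
directed steps. If every path of `S` is a shortest path crossing `v` and the
local paths at `v` are simultaneously satisfied by one orientation of the star
of `v`, then no two paths of `S` are in conflict (no shared undirected edge
receives opposite directions), and there is an orientation of all of `G`,
consistent with `D`, under which every path of `S` is directed from its source
to its target. -/
theorem stmt19 {V : Type*} [DecidableEq V] (G : SimpleGraph V)
    (EU : Set (Sym2 V)) (D : V → V → Prop)
    (hEU : EU ⊆ G.edgeSet)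
    (hD : ∀ a b, D a b → G.Adj a b ∧ Sym2.mk a b ∉ EU ∧ ¬ D b a)
    (hacyc : ¬ ∃ l : List (V × V), l ≠ [] ∧
        List.Chain' (fun e f => e.2 = f.1) l ∧
        (∀ e ∈ l, G.Adj e.1 e.2 ∧ (Sym2.mk.uncurry e ∈ EU ∨ D e.1 e.2)) ∧
        (∀ e f, l.head? = some e → l.getLast? = some f → f.2 = e.1) ∧
        (l.map Sym2.mk.uncurry).Nodup)
    (v : V) (S : Finset (List (V × V)))
    (hwalk : ∀ l ∈ S, l ≠ [] ∧ List.Chain' (fun e f => e.2 = f.1) l ∧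
        ∀ e ∈ l, G.Adj e.1 e.2 ∧ (Sym2.mk.uncurry e ∈ EU ∨ D e.1 e.2))
    (hshort : ∀ l ∈ S, ∀ e f : V × V, l.head? = some e → l.getLast? = some f →
        l.length = G.dist e.1 f.2)
    (hcross : ∀ l ∈ S, ∃ e ∈ l, e.1 = v ∨ e.2 = v)
    (hlocal : ∃ oloc : V → V → Bool,
        (∀ a b, G.Adj a b → oloc a b = !oloc b a) ∧
        (∀ a b, D a b → oloc a b = true) ∧
        ∀ l ∈ S, ∀ e ∈ l, (e.1 = v ∨ e.2 = v) → oloc e.1 e.2 = true) :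
    (∀ l1 ∈ S, ∀ l2 ∈ S, ∀ a b : V,
        (a, b) ∈ l1 → (b, a) ∈ l2 → Sym2.mk a b ∉ EU) ∧
    ∃ ori : V → V → Bool,
      (∀ a b, G.Adj a b → ori a b = !ori b a) ∧
      (∀ a b, D a b → ori a b = true) ∧
      ∀ l ∈ S, ∀ e ∈ l, ori e.1 e.2 = true :=
  stmt19_general G EU D hD hacyc v S hwalk hshort hcross hlocal
end
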